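/- For every n ≥ 0, every subset I ⊆ [n], and every E ⊆ I such that either E contains the minimal element of some run of I, or i ∈ E and i+1 ∈ E for some integer i, the entry B'_n(I, ([n] \ I) ∪ E) of the matrix B'_n = U_n B_n V_n equals 0. -/
import Mathlib


open Finset Polynomial
open scoped Classical

namespace AR

/-- `binVal I = r_n(I) - 1 = Σ_{i ∈ I} 2^(i-1)`. -/
def binVal (I : Finset ℕ) : ℕ := ∑ i ∈ I, 2 ^ (i - 1)

lemma binVal_Icc (m : ℕ) : binVal (Finset.Icc 1 m) = 2 ^ m - 1 := by
  induction m with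
  | zero => simp [binVal]
  | succ k ih =>
      rw [binVal, Finset.sum_Icc_succ_top (by omega)]
      rw [binVal] at ih
      rw [ih]
      have h1 : 1 ≤ 2 ^ k := Nat.one_le_two_pow
      simp only [Nat.add_sub_cancel, pow_succ]
      omega

lemma binVal_lt {n : ℕ} {I : Finset ℕ} (h : I ⊆ Finset.Icc 1 n) : binVal I < 2 ^ n := by
  have h1 : binVal I ≤ binVal (Finset.Icc 1 n) :=
    Finset.sum_le_sum_of_subset h
  have h2 := binVal_Icc n
  have h3 : 1 ≤ 2 ^ n := Nat.one_le_two_pow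
  omega

/-- The row/column index (zero-based, i.e. `r_n(I) - 1`) corresponding to a subset `I ⊆ [n]`. -/
def idx (n : ℕ) (I : Finset ℕ) (h : I ⊆ Finset.Icc 1 n) : Fin (2 ^ n) :=
  ⟨binVal I, binVal_lt h⟩

def blockEquiv (n : ℕ) : Fin (2 ^ n) ⊕ Fin (2 ^ n) ≃ Fin (2 ^ (n + 1)) :=
  finSumFinEquiv.trans (finCongr (by rw [pow_succ, mul_two]))

/-- The pair of Adin–Roichman matrices `(A_n, B_n)`, defined recursively. -/
def ABpair : (n : ℕ) → Matrix (Fin (2 ^ n)) (Fin (2 ^ n)) ℤ × Matrix (Fin (2 ^ n)) (Fin (2 ^ n)) ℤ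
  | 0 => (Matrix.of fun _ _ => 1, Matrix.of fun _ _ => 1)
  | n + 1 =>
      let p := ABpair n
      ((Matrix.reindex (blockEquiv n) (blockEquiv n)) (Matrix.fromBlocks p.1 p.1 p.1 (-p.2)),
       (Matrix.reindex (blockEquiv n) (blockEquiv n)) (Matrix.fromBlocks p.1 p.1 0 (-p.2)))

def A (n : ℕ) : Matrix (Fin (2 ^ n)) (Fin (2 ^ n)) ℤ := (ABpair n).1

def B (n : ℕ) : Matrix (Fin (2 ^ n)) (Fin (2 ^ n)) ℤ := (ABpair n).2

/-- `R` is a (nonempty) integer interval. -/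
def IsInterval (R : Finset ℕ) : Prop := ∃ a b : ℕ, R = Finset.Icc a b

/-- `R` is a run of `I`: a maximal nonempty interval contained in `I`. -/
def IsRun (I R : Finset ℕ) : Prop :=
  R.Nonempty ∧ IsInterval R ∧ R ⊆ I ∧
    ∀ S : Finset ℕ, IsInterval S → S ⊆ I → R ⊆ S → S = R

/-- `R` is a prefix of `S` : `min R = min S` and `R ⊆ S`. -/
def IsPrefixOf (R S : Finset ℕ) : Prop := R.min = S.min ∧ R ⊆ S

/-- `I ≫ J` : every run of `I ∩ J` is a prefix of a run of `I`. -/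
def Gg (I J : Finset ℕ) : Prop :=
  ∀ R : Finset ℕ, IsRun (I ∩ J) R → ∃ S : Finset ℕ, IsRun I S ∧ IsPrefixOf R S

/-- The set of runs of `I`. -/
noncomputable def runs (I : Finset ℕ) : Finset (Finset ℕ) :=
  I.powerset.filter (fun R => IsRun I R)

/-- `π(I)`: the product of (size + 1) over the runs of `I`. -/
noncomputable def piFun (I : Finset ℕ) : ℕ := ∏ R ∈ runs I, (R.card + 1)

/-- `π'_n(I)`: the product of (size + 1) over the runs of `I` not containing `n`. -/
noncomputable def piFun' (n : ℕ) (I : Finset ℕ) : ℕ :=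
  ∏ R ∈ (runs I).filter (fun R => n ∉ R), (R.card + 1)

/-- The subset of `[n]` encoded by a zero-based index `i : Fin (2^n)` (binary digits). -/
def decode (n : ℕ) (i : Fin (2 ^ n)) : Finset ℕ :=
  (Finset.Icc 1 n).filter (fun k => Nat.testBit i.val (k - 1))

/-- The matrix `U_n`, with `U_n(I,J) = 1` if `I ⊇ J` and `0` otherwise. -/
def U (n : ℕ) : Matrix (Fin (2 ^ n)) (Fin (2 ^ n)) ℤ :=
  Matrix.of fun i j => if decode n j ⊆ decode n i then 1 else 0

/-- The matrix `V_n = U_n⁻¹`, with `V_n(I,J) = (-1)^{|I \ J|}` if `I ⊇ J` and `0` otherwise. -/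
def V (n : ℕ) : Matrix (Fin (2 ^ n)) (Fin (2 ^ n)) ℤ :=
  Matrix.of fun i j =>
    if decode n j ⊆ decode n i then (-1) ^ ((decode n i) \ (decode n j)).card else 0

def A' (n : ℕ) : Matrix (Fin (2 ^ n)) (Fin (2 ^ n)) ℤ := U n * A n * V n

def B' (n : ℕ) : Matrix (Fin (2 ^ n)) (Fin (2 ^ n)) ℤ := U n * B n * V n

/-- `E ⪯ I` : `E ⊆ I`, `E` contains no minimal element of a run of `I`,
and `E` contains no two consecutive integers. -/
def SubPrec (E I : Finset ℕ) : Prop :=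
  E ⊆ I ∧ (∀ R : Finset ℕ, (h : IsRun I R) → R.min' h.1 ∉ E) ∧
    ∀ i : ℕ, ¬ (i ∈ E ∧ i + 1 ∈ E)

/-- `I ⇝ J` : `J = ([n] \ I) ∪ E` for some `E ⪯ I`. -/
def Step (n : ℕ) (I J : Finset ℕ) : Prop :=
  ∃ E : Finset ℕ, SubPrec E I ∧ J = (Finset.Icc 1 n \ I) ∪ E

/-- `π_μ` for a composition `μ` of `n`. -/
def piComp {n : ℕ} (μ : Composition n) : ℕ := (μ.blocks.map (· + 1)).prod

/-- `π'_μ` for a composition `μ` of `n`. -/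
def piComp' {n : ℕ} (μ : Composition n) : ℕ := (μ.blocks.dropLast.map (· + 1)).prod

/-- The Thue–Morse sequence: `thueMorse m = s₂(m) % 2`. -/
def thueMorse (m : ℕ) : ℕ := (Nat.digits 2 m).sum % 2


/-! ### Auxiliary development -/

/-- The "bad set" hypothesis. -/
def Bad (I E : Finset ℕ) : Prop :=
  (∃ R : Finset ℕ, ∃ h : IsRun I R, R.min' h.1 ∈ E) ∨ (∃ i : ℕ, i ∈ E ∧ i + 1 ∈ E)

lemma two_pow_succ (n : ℕ) : 2 ^ (n + 1) = 2 ^ n + 2 ^ n := by rw [pow_succ]; ring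

lemma decode_subset_Icc (n : ℕ) (i : Fin (2 ^ n)) : decode n i ⊆ Finset.Icc 1 n :=
  Finset.filter_subset _ _

lemma testBit_top {v n : ℕ} (hv : v < 2 ^ (n + 1)) : v.testBit n = true ↔ 2 ^ n ≤ v := by
  constructor
  · exact fun h => Nat.ge_two_pow_of_testBit h
  · intro h
    have hvw : v = 2 ^ n + (v - 2 ^ n) := by omega
    have hw : v - 2 ^ n < 2 ^ n := by
      have := two_pow_succ n; omega
    rw [hvw, Nat.testBit_two_pow_add_eq, Nat.testBit_lt_two_pow hw]
    rfl

lemma mem_decode_top {n : ℕ} (j : Fin (2 ^ (n + 1))) :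
    n + 1 ∈ decode (n + 1) j ↔ 2 ^ n ≤ j.val := by
  simp only [decode, Finset.mem_filter, Finset.mem_Icc, Nat.add_sub_cancel]
  rw [testBit_top j.isLt]
  omega

lemma decode_low {n : ℕ} (i : Fin (2 ^ (n + 1))) (h : i.val < 2 ^ n) :
    decode (n + 1) i = decode n ⟨i.val, h⟩ := by
  ext k
  simp only [decode, Finset.mem_filter, Finset.mem_Icc]
  constructor
  · rintro ⟨⟨h1, h2⟩, h3⟩
    refine ⟨⟨h1, ?_⟩, h3⟩
    by_contra hk
    have hk' : k = n + 1 := by omega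
    subst hk'
    rw [Nat.add_sub_cancel, Nat.testBit_lt_two_pow h] at h3
    exact Bool.false_ne_true h3
  · rintro ⟨⟨h1, h2⟩, h3⟩
    exact ⟨⟨h1, by omega⟩, h3⟩

lemma decode_high {n : ℕ} (i : Fin (2 ^ (n + 1))) (h : 2 ^ n ≤ i.val) :
    decode (n + 1) i
      = insert (n + 1) (decode n ⟨i.val - 2 ^ n, by have := i.isLt; have := two_pow_succ n; omega⟩) := by
  have hlt : i.val - 2 ^ n < 2 ^ n := by have := i.isLt; have := two_pow_succ n; omega
  have hval : i.val = 2 ^ n + (i.val - 2 ^ n) := by omega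
  ext k
  simp only [decode, Finset.mem_insert, Finset.mem_filter, Finset.mem_Icc]
  constructor
  · rintro ⟨⟨h1, h2⟩, h3⟩
    rcases Nat.lt_or_ge k (n + 1) with hk | hk
    · right
      refine ⟨⟨h1, by omega⟩, ?_⟩
      rw [hval, Nat.testBit_two_pow_add_gt (by omega)] at h3
      exact h3
    · left; omega
  · rintro (rfl | ⟨⟨h1, h2⟩, h3⟩)
    · refine ⟨⟨by omega, le_refl _⟩, ?_⟩
      rw [Nat.add_sub_cancel, hval, Nat.testBit_two_pow_add_eq,
        Nat.testBit_lt_two_pow hlt]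
      rfl
    · refine ⟨⟨h1, by omega⟩, ?_⟩
      rw [hval, Nat.testBit_two_pow_add_gt (by omega)]
      exact h3

lemma not_top_mem_decode {n : ℕ} (i : Fin (2 ^ n)) : n + 1 ∉ decode n i := by
  intro h
  have := decode_subset_Icc n i h
  simp [Finset.mem_Icc] at this

lemma decode_idx {n : ℕ} {I : Finset ℕ} (hI : I ⊆ Finset.Icc 1 n) :
    decode n (idx n I hI) = I := by
  induction n generalizing I with
  | zero =>
      have hIe : I = ∅ := by
        rw [Finset.Icc_eq_empty (by omega)] at hI
        exact Finset.subset_empty.mp hI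
      subst hIe
      simp [decode, Finset.Icc_eq_empty (show ¬ (1:ℕ) ≤ 0 by omega)]
  | succ n IH =>
      by_cases hmem : n + 1 ∈ I
      · have hI' : I.erase (n + 1) ⊆ Finset.Icc 1 n := by
          intro x hx
          have hx1 := Finset.mem_of_mem_erase hx
          have hx2 := Finset.ne_of_mem_erase hx
          have := hI hx1
          simp only [Finset.mem_Icc] at this ⊢
          omega
        have hsum : binVal I = 2 ^ n + binVal (I.erase (n + 1)) := by
          rw [binVal, ← Finset.add_sum_erase _ _ hmem, Nat.add_sub_cancel]
          rfl
        have hge : 2 ^ n ≤ (idx (n + 1) I hI).val := by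
          simp only [idx]; omega
        rw [decode_high _ hge]
        have hfin : (⟨(idx (n + 1) I hI).val - 2 ^ n, by
            have := (idx (n + 1) I hI).isLt; have := two_pow_succ n; omega⟩ : Fin (2 ^ n))
            = idx n (I.erase (n + 1)) hI' := by
          apply Fin.ext
          simp only [idx]
          omega
        rw [hfin, IH hI']
        exact Finset.insert_erase hmem
      · have hI' : I ⊆ Finset.Icc 1 n := by
          intro x hx
          have := hI hx
          simp only [Finset.mem_Icc] at this ⊢
          refine ⟨this.1, ?_⟩
          rcases Nat.lt_or_ge x (n + 1) with h | h
          · omega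
          · exfalso; have : x = n + 1 := by omega
            exact hmem (this ▸ hx)
        have hlt : (idx (n + 1) I hI).val < 2 ^ n := binVal_lt hI'
        rw [decode_low _ hlt]
        have hfin : (⟨(idx (n + 1) I hI).val, hlt⟩ : Fin (2 ^ n)) = idx n I hI' := rfl
        rw [hfin, IH hI']

/-! ### Block structure -/

lemma blockEquiv_symm_low {n : ℕ} (i : Fin (2 ^ (n + 1))) (h : i.val < 2 ^ n) :
    (blockEquiv n).symm i = Sum.inl ⟨i.val, h⟩ := by
  apply (blockEquiv n).injective
  rw [Equiv.apply_symm_apply]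
  apply Fin.ext
  simp [blockEquiv]

lemma blockEquiv_symm_high {n : ℕ} (i : Fin (2 ^ (n + 1))) (h : 2 ^ n ≤ i.val) :
    (blockEquiv n).symm i
      = Sum.inr ⟨i.val - 2 ^ n, by have := i.isLt; have := two_pow_succ n; omega⟩ := by
  apply (blockEquiv n).injective
  rw [Equiv.apply_symm_apply]
  apply Fin.ext
  simp [blockEquiv]
  omega

lemma A_succ (n : ℕ) : A (n + 1) = (Matrix.reindex (blockEquiv n) (blockEquiv n))
    (Matrix.fromBlocks (A n) (A n) (A n) (-(B n))) := rfl

lemma B_succ (n : ℕ) : B (n + 1) = (Matrix.reindex (blockEquiv n) (blockEquiv n))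
    (Matrix.fromBlocks (A n) (A n) 0 (-(B n))) := rfl


lemma U_insert_left {a : ℕ} {I0 J0 : Finset ℕ} (haJ : a ∉ J0) :
    (if J0 ⊆ insert a I0 then (1 : ℤ) else 0) = if J0 ⊆ I0 then (1 : ℤ) else 0 := by
  simp only [Finset.subset_insert_iff_of_notMem haJ]

lemma U_insert_both {a : ℕ} {I0 J0 : Finset ℕ} (haJ : a ∉ J0) :
    (if insert a J0 ⊆ insert a I0 then (1 : ℤ) else 0) = if J0 ⊆ I0 then (1 : ℤ) else 0 := by
  simp only [Finset.insert_subset_insert_iff haJ]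

lemma V_insert_left {a : ℕ} {I0 J0 : Finset ℕ} (haI : a ∉ I0) (haJ : a ∉ J0) :
    (if J0 ⊆ insert a I0 then (-1 : ℤ) ^ (insert a I0 \ J0).card else 0)
      = -(if J0 ⊆ I0 then (-1 : ℤ) ^ (I0 \ J0).card else 0) := by
  by_cases h : J0 ⊆ I0
  · rw [if_pos (h.trans (Finset.subset_insert a I0)), if_pos h,
      Finset.insert_sdiff_of_notMem _ haJ,
      Finset.card_insert_of_notMem (fun hc => haI (Finset.mem_sdiff.mp hc).1), pow_succ]
    ring
  · rw [if_neg (fun hc => h ((Finset.subset_insert_iff_of_notMem haJ).mp hc)), if_neg h,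
      neg_zero]

lemma V_insert_both {a : ℕ} {I0 J0 : Finset ℕ} (haI : a ∉ I0) (haJ : a ∉ J0) :
    (if insert a J0 ⊆ insert a I0 then (-1 : ℤ) ^ ((insert a I0) \ (insert a J0)).card else 0)
      = if J0 ⊆ I0 then (-1 : ℤ) ^ (I0 \ J0).card else 0 := by
  have hsd : insert a I0 \ insert a J0 = I0 \ J0 := by
    ext x
    simp only [Finset.mem_sdiff, Finset.mem_insert, not_or]
    constructor
    · rintro ⟨rfl | hx, hne, hnJ⟩
      · exact absurd rfl hne
      · exact ⟨hx, hnJ⟩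
    · rintro ⟨hx, hnJ⟩
      exact ⟨Or.inr hx, fun hc => haI (hc ▸ hx), hnJ⟩
  rw [hsd]
  by_cases h : J0 ⊆ I0
  · rw [if_pos (Finset.insert_subset_insert a h), if_pos h]
  · rw [if_neg (fun hc => h ((Finset.insert_subset_insert_iff haJ).mp hc)), if_neg h]

lemma U_succ (n : ℕ) : U (n + 1) = (Matrix.reindex (blockEquiv n) (blockEquiv n))
    (Matrix.fromBlocks (U n) 0 (U n) (U n)) := by
  ext i j
  rw [Matrix.reindex_apply, Matrix.submatrix_apply]
  rcases Nat.lt_or_ge i.val (2 ^ n) with hi | hi <;>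
    rcases Nat.lt_or_ge j.val (2 ^ n) with hj | hj
  · rw [blockEquiv_symm_low i hi, blockEquiv_symm_low j hj, Matrix.fromBlocks_apply₁₁]
    simp only [U, Matrix.of_apply, decode_low i hi, decode_low j hj]
  · rw [blockEquiv_symm_low i hi, blockEquiv_symm_high j hj, Matrix.fromBlocks_apply₁₂]
    simp only [U, Matrix.of_apply, decode_low i hi, decode_high j hj, Matrix.zero_apply]
    rw [if_neg]
    intro hsub
    exact not_top_mem_decode _ (hsub (Finset.mem_insert_self _ _))
  · rw [blockEquiv_symm_high i hi, blockEquiv_symm_low j hj, Matrix.fromBlocks_apply₂₁]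
    simp only [U, Matrix.of_apply, decode_low j hj, decode_high i hi]
    exact U_insert_left (not_top_mem_decode _)
  · rw [blockEquiv_symm_high i hi, blockEquiv_symm_high j hj, Matrix.fromBlocks_apply₂₂]
    simp only [U, Matrix.of_apply, decode_high i hi, decode_high j hj]
    exact U_insert_both (not_top_mem_decode _)

lemma V_succ (n : ℕ) : V (n + 1) = (Matrix.reindex (blockEquiv n) (blockEquiv n))
    (Matrix.fromBlocks (V n) 0 (-(V n)) (V n)) := by
  ext i j
  rw [Matrix.reindex_apply, Matrix.submatrix_apply]
  rcases Nat.lt_or_ge i.val (2 ^ n) with hi | hi <;>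
    rcases Nat.lt_or_ge j.val (2 ^ n) with hj | hj
  · rw [blockEquiv_symm_low i hi, blockEquiv_symm_low j hj, Matrix.fromBlocks_apply₁₁]
    simp only [V, Matrix.of_apply, decode_low i hi, decode_low j hj]
  · rw [blockEquiv_symm_low i hi, blockEquiv_symm_high j hj, Matrix.fromBlocks_apply₁₂]
    simp only [V, Matrix.of_apply, decode_low i hi, decode_high j hj, Matrix.zero_apply]
    rw [if_neg]
    intro hsub
    exact not_top_mem_decode _ (hsub (Finset.mem_insert_self _ _))
  · rw [blockEquiv_symm_high i hi, blockEquiv_symm_low j hj, Matrix.fromBlocks_apply₂₁]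
    simp only [V, Matrix.of_apply, decode_low j hj, decode_high i hi, Matrix.neg_apply]
    exact V_insert_left (not_top_mem_decode _) (not_top_mem_decode _)
  · rw [blockEquiv_symm_high i hi, blockEquiv_symm_high j hj, Matrix.fromBlocks_apply₂₂]
    simp only [V, Matrix.of_apply, decode_high i hi, decode_high j hj]
    exact V_insert_both (not_top_mem_decode _) (not_top_mem_decode _)

lemma reindex_mul {n : ℕ} (X Y : Matrix (Fin (2 ^ n) ⊕ Fin (2 ^ n)) (Fin (2 ^ n) ⊕ Fin (2 ^ n)) ℤ) :
    (Matrix.reindex (blockEquiv n) (blockEquiv n)) X * (Matrix.reindex (blockEquiv n) (blockEquiv n)) Y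
      = (Matrix.reindex (blockEquiv n) (blockEquiv n)) (X * Y) := by
  simp only [Matrix.reindex_apply]
  exact Matrix.submatrix_mul_equiv X Y _ _ _

lemma fromBlocks_congr {m : Type*} {w x y z w' x' y' z' : Matrix m m ℤ}
    (h1 : w = w') (h2 : x = x') (h3 : y = y') (h4 : z = z') :
    Matrix.fromBlocks w x y z = Matrix.fromBlocks w' x' y' z' := by
  rw [h1, h2, h3, h4]

lemma A'_succ (n : ℕ) : A' (n + 1) = (Matrix.reindex (blockEquiv n) (blockEquiv n))
    (Matrix.fromBlocks 0 (A' n) (A' n + B' n) (A' n - B' n)) := by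
  rw [A', A_succ, U_succ, V_succ, reindex_mul, reindex_mul]
  congr 1
  rw [Matrix.fromBlocks_multiply, Matrix.fromBlocks_multiply]
  refine fromBlocks_congr ?_ ?_ ?_ ?_ <;> (try simp only [A', B']) <;> noncomm_ring

lemma B'_succ (n : ℕ) : B' (n + 1) = (Matrix.reindex (blockEquiv n) (blockEquiv n))
    (Matrix.fromBlocks 0 (A' n) (B' n) (A' n - B' n)) := by
  rw [B', B_succ, U_succ, V_succ, reindex_mul, reindex_mul]
  congr 1
  rw [Matrix.fromBlocks_multiply, Matrix.fromBlocks_multiply]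
  refine fromBlocks_congr ?_ ?_ ?_ ?_ <;> (try simp only [A', B']) <;> noncomm_ring

lemma A'_zero_eq_B'_zero : A' 0 = B' 0 := rfl

/-- `n ∈ J` implies `A'ₙ(I,J) = B'ₙ(I,J)`. -/
lemma A'_eq_B' (n : ℕ) (i j : Fin (2 ^ n)) (hj : n ∈ decode n j) : A' n i j = B' n i j := by
  cases n with
  | zero =>
      exfalso
      have := decode_subset_Icc 0 j hj
      simp [Finset.mem_Icc] at this
  | succ n =>
      have hj2 : 2 ^ n ≤ j.val := (mem_decode_top j).mp hj
      rw [A'_succ, B'_succ, Matrix.reindex_apply, Matrix.reindex_apply,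
        Matrix.submatrix_apply, Matrix.submatrix_apply, blockEquiv_symm_high j hj2]
      rcases Nat.lt_or_ge i.val (2 ^ n) with hi | hi
      · rw [blockEquiv_symm_low i hi, Matrix.fromBlocks_apply₁₂, Matrix.fromBlocks_apply₁₂]
      · rw [blockEquiv_symm_high i hi, Matrix.fromBlocks_apply₂₂, Matrix.fromBlocks_apply₂₂]

/-! ### Combinatorics of runs -/

lemma min'_Icc {a b : ℕ} (h : a ≤ b) (hne : (Finset.Icc a b).Nonempty) :
    (Finset.Icc a b).min' hne = a :=
  le_antisymm (Finset.min'_le _ _ (Finset.mem_Icc.mpr ⟨le_refl a, h⟩))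
    (Finset.le_min' _ _ _ fun x hx => (Finset.mem_Icc.mp hx).1)

lemma IsRun.exists_Icc {I R : Finset ℕ} (h : IsRun I R) :
    ∃ a b : ℕ, a ≤ b ∧ R = Finset.Icc a b := by
  obtain ⟨hne, ⟨a, b, rfl⟩, _, _⟩ := h
  exact ⟨a, b, by rwa [Finset.nonempty_Icc] at hne, rfl⟩

/-- Removing the top element of `I` preserves runs whose min is not the top element. -/
lemma run_erase_top {I R : Finset ℕ} {m : ℕ} (hm : m ∈ I) (hmax : ∀ x ∈ I, x ≤ m)
    (h : IsRun I R) (ha : R.min' h.1 ≠ m) :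
    ∃ R' : Finset ℕ, ∃ h' : IsRun (I.erase m) R', R'.min' h'.1 = R.min' h.1 := by
  obtain ⟨a, b, hab, rfl⟩ := h.exists_Icc
  have hmin : (Finset.Icc a b).min' h.1 = a := min'_Icc hab h.1
  by_cases hmR : m ∈ Finset.Icc a b
  · -- the run ends at m; shorten it
    have hbI : b ∈ I := h.2.2.1 (Finset.mem_Icc.mpr ⟨hab, le_refl b⟩)
    have hbm : b = m := le_antisymm (hmax b hbI) (Finset.mem_Icc.mp hmR).2
    have ham : a < m := by
      rw [hmin] at ha
      omega
    have hne' : (Finset.Icc a (m - 1)).Nonempty := Finset.nonempty_Icc.mpr (by omega)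
    refine ⟨Finset.Icc a (m - 1), ⟨hne', ⟨a, m - 1, rfl⟩, ?_, ?_⟩, ?_⟩
    · intro x hx
      have hx' := Finset.mem_Icc.mp hx
      refine Finset.mem_erase.mpr ⟨by omega, h.2.2.1 (Finset.mem_Icc.mpr ⟨hx'.1, by omega⟩)⟩
    · rintro S ⟨c, d, rfl⟩ hSsub hRS
      have hca : c ≤ a := by
        have := Finset.mem_Icc.mp (hRS (Finset.mem_Icc.mpr ⟨le_refl a, by omega⟩))
        exact this.1
      have hdm : m - 1 ≤ d := by
        have := Finset.mem_Icc.mp (hRS (Finset.mem_Icc.mpr ⟨by omega, le_refl _⟩))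
        exact this.2
      have hd : d ≤ m - 1 := by
        have hdmem : d ∈ Finset.Icc c d := Finset.mem_Icc.mpr ⟨by omega, le_refl d⟩
        have hdI := Finset.mem_erase.mp (hSsub hdmem)
        have := hmax d hdI.2
        have hne := hdI.1
        omega
      have hd' : d = m - 1 := le_antisymm hd hdm
      subst hd'
      have hT : Finset.Icc c m ⊆ I := by
        intro x hx
        have hx' := Finset.mem_Icc.mp hx
        by_cases hxm : x = m
        · exact hxm ▸ hm
        · have : x ∈ Finset.Icc c (m - 1) := Finset.mem_Icc.mpr ⟨hx'.1, by omega⟩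
          exact Finset.mem_of_mem_erase (hSsub this)
      have hTR := h.2.2.2 (Finset.Icc c m) ⟨c, m, rfl⟩ hT
        (Finset.Icc_subset_Icc hca (by omega))
      have hc : c = a := by
        have h1 : c ∈ Finset.Icc a b := hTR ▸ Finset.mem_Icc.mpr ⟨le_refl c, by omega⟩
        have := Finset.mem_Icc.mp h1
        omega
      rw [hc]
    · exact (min'_Icc (by omega : a ≤ m - 1) _).trans hmin.symm
  · -- m is not in the run: it stays a run
    refine ⟨Finset.Icc a b, ⟨h.1, ⟨a, b, rfl⟩, ?_, ?_⟩, rfl⟩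
    · intro x hx
      exact Finset.mem_erase.mpr ⟨fun hxm => hmR (hxm ▸ hx), h.2.2.1 hx⟩
    · intro S hS1 hS2 hS3
      exact h.2.2.2 S hS1 (hS2.trans (Finset.erase_subset m I)) hS3

/-- If a run of `I` has min equal to the top element `m`, then `m - 1 ∉ I`. -/
lemma run_min_top {I R : Finset ℕ} {m : ℕ} (hm1 : 1 ≤ m) (hmax : ∀ x ∈ I, x ≤ m)
    (h : IsRun I R) (hminR : R.min' h.1 = m) : m - 1 ∉ I := by
  obtain ⟨a, b, hab, rfl⟩ := h.exists_Icc
  have hmin : (Finset.Icc a b).min' h.1 = a := min'_Icc hab h.1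
  have ham : a = m := by rw [hmin] at hminR; exact hminR
  have hbI : b ∈ I := h.2.2.1 (Finset.mem_Icc.mpr ⟨hab, le_refl b⟩)
  have hbm : b = m := le_antisymm (hmax b hbI) (by omega)
  intro hmem
  have hT : Finset.Icc (m - 1) m ⊆ I := by
    intro x hx
    have hx' := Finset.mem_Icc.mp hx
    by_cases hxm : x = m
    · exact hxm ▸ (h.2.2.1 (Finset.mem_Icc.mpr ⟨le_of_eq ham, hbm.ge⟩))
    · have : x = m - 1 := by omega
      exact this ▸ hmem
  have hTR := h.2.2.2 (Finset.Icc (m - 1) m) ⟨m - 1, m, rfl⟩ hT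
    (by rw [ham, hbm]; exact Finset.Icc_subset_Icc (by omega) (le_refl m))
  have : m - 1 ∈ Finset.Icc a b := hTR ▸ Finset.mem_Icc.mpr ⟨le_refl _, by omega⟩
  have := Finset.mem_Icc.mp this
  omega

lemma bad_case_B {n : ℕ} {I E : Finset ℕ} (hI : I ⊆ Finset.Icc 1 (n + 1))
    (hm : n + 1 ∈ I) (hne : n + 1 ∉ E) (hbad : Bad I E) : Bad (I.erase (n + 1)) E := by
  rcases hbad with ⟨R, hR, hmin⟩ | hpair
  · left
    have hmax : ∀ x ∈ I, x ≤ n + 1 := fun x hx => (Finset.mem_Icc.mp (hI hx)).2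
    obtain ⟨R', h', hmin'⟩ := run_erase_top hm hmax hR
      (fun hc => hne (hc ▸ hmin))
    exact ⟨R', h', hmin' ▸ hmin⟩
  · right; exact hpair

lemma bad_case_C {n : ℕ} {I E : Finset ℕ} (hI : I ⊆ Finset.Icc 1 (n + 1)) (hE : E ⊆ I)
    (hm : n + 1 ∈ I) (hme : n + 1 ∈ E) (hbad : Bad I E) :
    Bad (I.erase (n + 1)) (E.erase (n + 1)) ∨ n ∈ E.erase (n + 1)
      ∨ (1 ≤ n ∧ n ∉ I.erase (n + 1)) ∨ n = 0 := by
  have hmax : ∀ x ∈ I, x ≤ n + 1 := fun x hx => (Finset.mem_Icc.mp (hI hx)).2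
  rcases hbad with ⟨R, hR, hmin⟩ | ⟨p, hp1, hp2⟩
  · by_cases ha : R.min' hR.1 = n + 1
    · -- run is {n+1}; then n ∉ I
      have hnI : n ∉ I := by
        have := run_min_top (by omega) hmax hR ha
        simpa using this
      rcases Nat.eq_zero_or_pos n with hn0 | hn1
      · right; right; right; exact hn0
      · right; right; left
        exact ⟨hn1, fun hc => hnI (Finset.mem_of_mem_erase hc)⟩
    · left; left
      obtain ⟨R', h', hmin'⟩ := run_erase_top hm hmax hR ha
      refine ⟨R', h', Finset.mem_erase.mpr ⟨?_, hmin' ▸ hmin⟩⟩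
      rw [hmin']; exact ha
  · have hple : p + 1 ≤ n + 1 := (Finset.mem_Icc.mp (hI (hE hp2))).2
    by_cases hpn : p + 1 = n + 1
    · right; left
      have hpn' : p = n := by omega
      subst hpn'
      exact Finset.mem_erase.mpr ⟨by omega, hp1⟩
    · left; right
      exact ⟨p, Finset.mem_erase.mpr ⟨by omega, hp1⟩, Finset.mem_erase.mpr ⟨hpn, hp2⟩⟩

/-! ### Set identities for the complement-union -/

lemma compl_union_low {n : ℕ} {I E : Finset ℕ} (hI : I ⊆ Finset.Icc 1 (n + 1))
    (hm : n + 1 ∉ I) (hE : E ⊆ I) :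
    (Finset.Icc 1 (n + 1) \ I) ∪ E = insert (n + 1) ((Finset.Icc 1 n \ I) ∪ E) := by
  ext x
  simp only [Finset.mem_union, Finset.mem_sdiff, Finset.mem_Icc, Finset.mem_insert]
  constructor
  · rintro (⟨⟨h1, h2⟩, h3⟩ | hx)
    · by_cases hxn : x = n + 1
      · left; exact hxn
      · right; left; exact ⟨⟨h1, by omega⟩, h3⟩
    · right; right; exact hx
  · rintro (rfl | ⟨⟨h1, h2⟩, h3⟩ | hx)
    · left; exact ⟨⟨by omega, le_refl _⟩, hm⟩
    · left; exact ⟨⟨h1, by omega⟩, h3⟩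
    · right; exact hx

lemma compl_union_mid {n : ℕ} {I E : Finset ℕ} (hm : n + 1 ∈ I) (hne : n + 1 ∉ E) :
    (Finset.Icc 1 (n + 1) \ I) ∪ E = (Finset.Icc 1 n \ I.erase (n + 1)) ∪ E := by
  ext x
  simp only [Finset.mem_union, Finset.mem_sdiff, Finset.mem_Icc, Finset.mem_erase]
  constructor
  · rintro (⟨⟨h1, h2⟩, h3⟩ | hx)
    · left
      have hxn : x ≠ n + 1 := fun hc => h3 (hc ▸ hm)
      exact ⟨⟨h1, by omega⟩, fun hc => h3 hc.2⟩
    · right; exact hx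
  · rintro (⟨⟨h1, h2⟩, h3⟩ | hx)
    · left
      refine ⟨⟨h1, by omega⟩, fun hc => h3 ⟨by omega, hc⟩⟩
    · right; exact hx

lemma compl_union_high {n : ℕ} {I E : Finset ℕ} (hm : n + 1 ∈ I) (hme : n + 1 ∈ E) :
    (Finset.Icc 1 (n + 1) \ I) ∪ E
      = insert (n + 1) ((Finset.Icc 1 n \ I.erase (n + 1)) ∪ E.erase (n + 1)) := by
  ext x
  simp only [Finset.mem_union, Finset.mem_sdiff, Finset.mem_Icc, Finset.mem_insert,
    Finset.mem_erase]
  constructor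
  · rintro (⟨⟨h1, h2⟩, h3⟩ | hx)
    · right; left
      have hxn : x ≠ n + 1 := fun hc => h3 (hc ▸ hm)
      exact ⟨⟨h1, by omega⟩, fun hc => h3 hc.2⟩
    · by_cases hxn : x = n + 1
      · left; exact hxn
      · right; right; exact ⟨hxn, hx⟩
  · rintro (rfl | ⟨⟨h1, h2⟩, h3⟩ | ⟨h1, h2⟩)
    · right; exact hme
    · left; refine ⟨⟨h1, by omega⟩, fun hc => h3 ⟨by omega, hc⟩⟩
    · right; exact h2

/-! ### The main induction -/

lemma main_induction (n : ℕ) : ∀ (i j : Fin (2 ^ n)) (E : Finset ℕ), E ⊆ decode n i →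
    Bad (decode n i) E → decode n j = (Finset.Icc 1 n \ decode n i) ∪ E →
    A' n i j = 0 ∧ B' n i j = 0 := by
  induction n with
  | zero =>
      intro i j E hE hbad _
      exfalso
      have hIe : decode 0 i = ∅ := by
        have := decode_subset_Icc 0 i
        rw [Finset.Icc_eq_empty (by omega)] at this
        exact Finset.subset_empty.mp this
      rw [hIe, Finset.subset_empty] at hE
      subst hE
      rcases hbad with ⟨R, hR, hmin⟩ | ⟨p, hp, _⟩
      · simp at hmin
      · simp at hp
  | succ n IH =>
      intro i j E hE hbad hJ
      set I := decode (n + 1) i with hIdef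
      have hI : I ⊆ Finset.Icc 1 (n + 1) := decode_subset_Icc _ _
      rcases Nat.lt_or_ge i.val (2 ^ n) with hi | hi
      · -- n+1 ∉ I : top-right block, entry A' n
        set i0 : Fin (2 ^ n) := ⟨i.val, hi⟩ with hi0
        have hIlow : I = decode n i0 := decode_low i hi
        have hmI : n + 1 ∉ I := hIlow ▸ not_top_mem_decode i0
        have hj2 : 2 ^ n ≤ j.val := by
          rw [← mem_decode_top, hJ, compl_union_low hI hmI hE]
          exact Finset.mem_insert_self _ _
        set j0 : Fin (2 ^ n) := ⟨j.val - 2 ^ n, by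
          have := j.isLt; have := two_pow_succ n; omega⟩ with hj0
        have hJhigh : decode (n + 1) j = insert (n + 1) (decode n j0) := decode_high j hj2
        have hJ0 : decode n j0 = (Finset.Icc 1 n \ decode n i0) ∪ E := by
          have h1 : insert (n + 1) (decode n j0)
              = insert (n + 1) ((Finset.Icc 1 n \ I) ∪ E) := by
            rw [← hJhigh, hJ, compl_union_low hI hmI hE]
          have h2 : n + 1 ∉ decode n j0 := not_top_mem_decode j0
          have h3 : n + 1 ∉ (Finset.Icc 1 n \ I) ∪ E := by
            simp only [Finset.mem_union, Finset.mem_sdiff, Finset.mem_Icc]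
            rintro (⟨⟨_, h⟩, _⟩ | h)
            · omega
            · exact hmI (hE h)
          have h4 := congrArg (fun s => Finset.erase s (n + 1)) h1
          simp only [Finset.erase_insert h2, Finset.erase_insert h3] at h4
          rw [hIlow] at h4
          exact h4
        have hIH := IH i0 j0 E (hIlow ▸ hE) (hIlow ▸ hbad) hJ0
        rw [A'_succ, B'_succ, Matrix.reindex_apply, Matrix.reindex_apply,
          Matrix.submatrix_apply, Matrix.submatrix_apply,
          blockEquiv_symm_low i hi, blockEquiv_symm_high j hj2,
          Matrix.fromBlocks_apply₁₂, Matrix.fromBlocks_apply₁₂]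
        exact ⟨hIH.1, hIH.1⟩
      · -- n+1 ∈ I
        set i0 : Fin (2 ^ n) := ⟨i.val - 2 ^ n, by
          have := i.isLt; have := two_pow_succ n; omega⟩ with hi0
        have hIhigh : I = insert (n + 1) (decode n i0) := decode_high i hi
        have hmI : n + 1 ∈ I := hIhigh ▸ Finset.mem_insert_self _ _
        have hIer : I.erase (n + 1) = decode n i0 := by
          rw [hIhigh, Finset.erase_insert (not_top_mem_decode i0)]
        by_cases hme : n + 1 ∈ E
        · -- bottom-right block: A' n - B' n
          have hj2 : 2 ^ n ≤ j.val := by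
            rw [← mem_decode_top, hJ]
            exact Finset.mem_union_right _ hme
          set j0 : Fin (2 ^ n) := ⟨j.val - 2 ^ n, by
            have := j.isLt; have := two_pow_succ n; omega⟩ with hj0
          have hJhigh : decode (n + 1) j = insert (n + 1) (decode n j0) := decode_high j hj2
          have hJ0 : decode n j0
              = (Finset.Icc 1 n \ decode n i0) ∪ E.erase (n + 1) := by
            have h1 : insert (n + 1) (decode n j0)
                = insert (n + 1) ((Finset.Icc 1 n \ I.erase (n + 1)) ∪ E.erase (n + 1)) := by
              rw [← hJhigh, hJ, compl_union_high hmI hme]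
            have h2 : n + 1 ∉ decode n j0 := not_top_mem_decode j0
            have h3 : n + 1 ∉ (Finset.Icc 1 n \ I.erase (n + 1)) ∪ E.erase (n + 1) := by
              simp only [Finset.mem_union, Finset.mem_sdiff, Finset.mem_Icc, Finset.mem_erase]
              rintro (⟨⟨_, h⟩, _⟩ | ⟨h, _⟩)
              · omega
              · exact h rfl
            have h4 := congrArg (fun s => Finset.erase s (n + 1)) h1
            simp only [Finset.erase_insert h2, Finset.erase_insert h3] at h4
            rw [hIer] at h4
            exact h4
          have hsub0 : E.erase (n + 1) ⊆ decode n i0 := by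
            rw [← hIer]
            exact Finset.erase_subset_erase _ hE
          have hkey : A' n i0 j0 - B' n i0 j0 = 0 := by
            rcases bad_case_C hI hE hmI hme hbad with hb | hb | hb | hb
            · have := IH i0 j0 (E.erase (n + 1)) hsub0 (hIer ▸ hb) hJ0
              rw [this.1, this.2, sub_zero]
            · have hnj : n ∈ decode n j0 := by
                rw [hJ0]
                exact Finset.mem_union_right _ hb
              rw [A'_eq_B' n i0 j0 hnj, sub_self]
            · have hnj : n ∈ decode n j0 := by
                rw [hJ0]
                refine Finset.mem_union_left _ ?_
                rw [Finset.mem_sdiff, Finset.mem_Icc, ← hIer]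
                exact ⟨⟨hb.1, le_refl n⟩, hb.2⟩
              rw [A'_eq_B' n i0 j0 hnj, sub_self]
            · subst hb
              rw [A'_zero_eq_B'_zero, sub_self]
          rw [A'_succ, B'_succ, Matrix.reindex_apply, Matrix.reindex_apply,
            Matrix.submatrix_apply, Matrix.submatrix_apply,
            blockEquiv_symm_high i hi, blockEquiv_symm_high j hj2,
            Matrix.fromBlocks_apply₂₂, Matrix.fromBlocks_apply₂₂]
          have hkey2 : (A' n - B' n) i0 j0 = 0 := by
            rw [Matrix.sub_apply]; exact hkey
          exact ⟨hkey2, hkey2⟩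
        · -- bottom-left block
          have hmJ : n + 1 ∉ decode (n + 1) j := by
            rw [hJ]
            simp only [Finset.mem_union, Finset.mem_sdiff]
            rintro (⟨_, h⟩ | h)
            · exact h hmI
            · exact hme h
          have hj1 : j.val < 2 ^ n := by
            by_contra hc
            exact hmJ ((mem_decode_top j).mpr (by omega))
          set j0 : Fin (2 ^ n) := ⟨j.val, hj1⟩ with hj0
          have hJlow : decode (n + 1) j = decode n j0 := decode_low j hj1
          have hJ0 : decode n j0 = (Finset.Icc 1 n \ decode n i0) ∪ E := by
            rw [← hJlow, hJ, compl_union_mid hmI hme, hIer]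
          have hEsub : E ⊆ decode n i0 := by
            rw [← hIer]
            intro x hx
            exact Finset.mem_erase.mpr ⟨fun hc => hme (hc ▸ hx), hE hx⟩
          have hbad' : Bad (decode n i0) E := hIer ▸ bad_case_B hI hmI hme hbad
          have hIH := IH i0 j0 E hEsub hbad' hJ0
          rw [A'_succ, B'_succ, Matrix.reindex_apply, Matrix.reindex_apply,
            Matrix.submatrix_apply, Matrix.submatrix_apply,
            blockEquiv_symm_high i hi, blockEquiv_symm_low j hj1,
            Matrix.fromBlocks_apply₂₁, Matrix.fromBlocks_apply₂₁]
          refine ⟨?_, hIH.2⟩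
          show (A' n + B' n) i0 j0 = 0
          rw [Matrix.add_apply, hIH.1, hIH.2, add_zero]

theorem stmt14 (n : ℕ) (I E : Finset ℕ) (hI : I ⊆ Finset.Icc 1 n) (hE : E ⊆ I)
    (h : (∃ R : Finset ℕ, ∃ h : IsRun I R, R.min' h.1 ∈ E) ∨ (∃ i : ℕ, i ∈ E ∧ i + 1 ∈ E)) :
    B' n (idx n I hI)
      (idx n ((Finset.Icc 1 n \ I) ∪ E)
        (Finset.union_subset Finset.sdiff_subset (hE.trans hI))) = 0 := by
  have hJ : (Finset.Icc 1 n \ I) ∪ E ⊆ Finset.Icc 1 n :=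
    Finset.union_subset Finset.sdiff_subset (hE.trans hI)
  refine (main_induction n (idx n I hI) (idx n _ hJ) E ?_ ?_ ?_).2
  · rw [decode_idx]; exact hE
  · rw [decode_idx]; exact h
  · rw [decode_idx, decode_idx]

end AR
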